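/- Let 1 ≤ q ≤ ∞ and let (u_ε)_{ε∈(0,1]} be an S-moderate net of smooth functions on ℝ^n such that for every multi-index α and every m ∈ ℕ, ‖∂^α u_ε‖_{L^q(ℝ^n)} = O(ε^m) as ε → 0. Then (u_ε) is S-negligible. -/

import Mathlib

open MeasureTheory
open scoped ENNReal

noncomputable section

/-- `P ε` holds for all sufficiently small `ε ∈ (0,1]`. -/
def EvSmall (P : ℝ → Prop) : Prop :=
  ∃ η : ℝ, 0 < η ∧ η ≤ 1 ∧ ∀ ε : ℝ, 0 < ε → ε ≤ η → P ε

/-- Partial derivative in the `i`-th coordinate direction. -/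
def pd {n : ℕ} (i : Fin n) (f : (Fin n → ℝ) → ℂ) : (Fin n → ℝ) → ℂ :=
  fun x => fderiv ℝ f x (Pi.single i 1)

/-- Multi-index partial derivative `∂^β`. -/
def pdm {n : ℕ} (β : Fin n → ℕ) (f : (Fin n → ℝ) → ℂ) : (Fin n → ℝ) → ℂ :=
  (List.finRange n).foldr (fun i g => (pd i)^[β i] g) f

/-- The monomial `x^α`. -/
def monom {n : ℕ} (α : Fin n → ℕ) (x : Fin n → ℝ) : ℝ := ∏ i, (x i) ^ (α i)

/-- A net of (smooth) functions on `ℝ^n` is S-moderate if for all multi-indices `α, β`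
there is `N` with `sup_x |x^α ∂^β u_ε(x)| = O(ε^{-N})` as `ε → 0`. -/
def SMod {n : ℕ} (u : ℝ → (Fin n → ℝ) → ℂ) : Prop :=
  ∀ α β : Fin n → ℕ, ∃ N : ℕ, ∃ C : ℝ, EvSmall fun ε =>
    ∀ x, |monom α x| * ‖pdm β (u ε) x‖ ≤ C * ε ^ (-(N : ℤ))

/-- A net of (smooth) functions on `ℝ^n` is S-negligible if for all multi-indices `α, β`
and every `q ∈ ℕ`, `sup_x |x^α ∂^β u_ε(x)| = O(ε^q)` as `ε → 0`. -/
def SNeg {n : ℕ} (u : ℝ → (Fin n → ℝ) → ℂ) : Prop :=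
  ∀ α β : Fin n → ℕ, ∀ q : ℕ, ∃ C : ℝ, EvSmall fun ε =>
    ∀ x, |monom α x| * ‖pdm β (u ε) x‖ ≤ C * ε ^ q

/-- A moderate net of points of `ℝ^n`: `|x_ε| = O(ε^{-N})` for some `N`. -/
def PtMod {n : ℕ} (x : ℝ → Fin n → ℝ) : Prop :=
  ∃ N : ℕ, ∃ C : ℝ, EvSmall fun ε => ‖x ε‖ ≤ C * ε ^ (-(N : ℤ))


lemma pd_contDiff {n : ℕ} {f : (Fin n → ℝ) → ℂ} (hf : ContDiff ℝ (⊤ : ℕ∞) f) (i : Fin n) :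
    ContDiff ℝ (⊤ : ℕ∞) (pd i f) := by
  have h1 : ContDiff ℝ (⊤ : ℕ∞) (fun x => fderiv ℝ f x) := hf.fderiv_right (by simp)
  exact (ContinuousLinearMap.apply ℝ ℂ (Pi.single i 1 : Fin n → ℝ)).contDiff.comp h1

lemma pd_eq_snd {n : ℕ} {f : (Fin n → ℝ) → ℂ} (hf : ContDiff ℝ (⊤ : ℕ∞) f) (i j : Fin n) (x) :
    pd i (pd j f) x = fderiv ℝ (fderiv ℝ f) x (Pi.single i 1) (Pi.single j 1) := by
  have hd : DifferentiableAt ℝ (fun y => fderiv ℝ f y) x :=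
    ((hf.fderiv_right (m := (⊤ : ℕ∞)) ((by simp))).differentiable (by simp)).differentiableAt
  unfold pd
  rw [fderiv_clm_apply hd (differentiableAt_const _)]
  simp

lemma pd_comm {n : ℕ} {f : (Fin n → ℝ) → ℂ} (hf : ContDiff ℝ (⊤ : ℕ∞) f) (i j : Fin n) :
    pd i (pd j f) = pd j (pd i f) := by
  funext x
  rw [pd_eq_snd hf, pd_eq_snd hf]
  exact (hf.contDiffAt.isSymmSndFDerivAt (by rw [minSmoothness_of_isRCLikeNormedField]; exact WithTop.coe_le_coe.2 le_top)) _ _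


lemma pd_iter_contDiff {n : ℕ} {f : (Fin n → ℝ) → ℂ} (hf : ContDiff ℝ (⊤ : ℕ∞) f) (i : Fin n)
    (k : ℕ) : ContDiff ℝ (⊤ : ℕ∞) ((pd i)^[k] f) := by
  induction k generalizing f with
  | zero => exact hf
  | succ k ih => rw [Function.iterate_succ_apply]; exact ih (pd_contDiff hf i)

lemma pd_iter_comm {n : ℕ} {f : (Fin n → ℝ) → ℂ} (hf : ContDiff ℝ (⊤ : ℕ∞) f) (i j : Fin n)
    (k : ℕ) : pd i ((pd j)^[k] f) = (pd j)^[k] (pd i f) := by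
  induction k generalizing f with
  | zero => rfl
  | succ k ih =>
    rw [Function.iterate_succ_apply', pd_comm (pd_iter_contDiff hf j k) i j,
      ih hf, Function.iterate_succ_apply']

lemma foldr_contDiff {n : ℕ} (β : Fin n → ℕ) (l : List (Fin n)) {f : (Fin n → ℝ) → ℂ}
    (hf : ContDiff ℝ (⊤ : ℕ∞) f) :
    ContDiff ℝ (⊤ : ℕ∞) (l.foldr (fun i g => (pd i)^[β i] g) f) := by
  induction l with
  | nil => exact hf
  | cons j t ih => exact pd_iter_contDiff ih j (β j)

lemma pd_foldr_comm {n : ℕ} (β : Fin n → ℕ) (l : List (Fin n)) {f : (Fin n → ℝ) → ℂ}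
    (hf : ContDiff ℝ (⊤ : ℕ∞) f) (i : Fin n) :
    pd i (l.foldr (fun j g => (pd j)^[β j] g) f)
      = l.foldr (fun j g => (pd j)^[β j] g) (pd i f) := by
  induction l with
  | nil => rfl
  | cons j t ih =>
    simp only [List.foldr_cons]
    rw [pd_iter_comm (foldr_contDiff β t hf) i j, ih]

lemma foldr_congr_mem {n : ℕ} (β β' : Fin n → ℕ) (l : List (Fin n))
    (h : ∀ j ∈ l, β j = β' j) (f : (Fin n → ℝ) → ℂ) :
    l.foldr (fun j g => (pd j)^[β j] g) f = l.foldr (fun j g => (pd j)^[β' j] g) f := by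
  induction l with
  | nil => rfl
  | cons j t ih =>
    simp only [List.foldr_cons]
    rw [ih (fun a ha => h a (List.mem_cons_of_mem _ ha)), h j List.mem_cons_self]

lemma foldr_add_single {n : ℕ} (β : Fin n → ℕ) (l : List (Fin n)) (hl : l.Nodup)
    {f : (Fin n → ℝ) → ℂ} (hf : ContDiff ℝ (⊤ : ℕ∞) f) (i : Fin n) (hi : i ∈ l) :
    l.foldr (fun j g => (pd j)^[β j + (Pi.single i 1 : Fin n → ℕ) j] g) f
      = l.foldr (fun j g => (pd j)^[β j] g) (pd i f) := by
  induction l with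
  | nil => simp at hi
  | cons j t ih =>
    rcases List.nodup_cons.1 hl with ⟨hjt, ht⟩
    simp only [List.foldr_cons]
    rcases eq_or_ne j i with rfl | hji
    · have h1 : t.foldr (fun a g => (pd a)^[β a + (Pi.single j 1 : Fin n → ℕ) a] g) f
          = t.foldr (fun a g => (pd a)^[β a] g) f := by
        apply foldr_congr_mem
        intro a ha
        have : a ≠ j := fun h => hjt (h ▸ ha)
        simp [Pi.single_apply, this]
      rw [h1]
      have h2 : β j + (Pi.single j 1 : Fin n → ℕ) j = β j + 1 := by simp
      rw [h2, Function.iterate_succ_apply, pd_foldr_comm β t hf j]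
    · have hit : i ∈ t := by
        rcases List.mem_cons.1 hi with h | h
        · exact absurd h.symm hji
        · exact h
      rw [ih ht hit]
      have : β j + (Pi.single i 1 : Fin n → ℕ) j = β j := by simp [Pi.single_apply, hji]
      rw [this]

lemma pdm_contDiff {n : ℕ} (β : Fin n → ℕ) {f : (Fin n → ℝ) → ℂ} (hf : ContDiff ℝ (⊤ : ℕ∞) f) :
    ContDiff ℝ (⊤ : ℕ∞) (pdm β f) := foldr_contDiff β _ hf

lemma pd_pdm {n : ℕ} (β : Fin n → ℕ) {f : (Fin n → ℝ) → ℂ} (hf : ContDiff ℝ (⊤ : ℕ∞) f)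
    (i : Fin n) : pd i (pdm β f) = pdm (β + Pi.single i 1) f := by
  unfold pdm
  simp only [Pi.add_apply]
  rw [pd_foldr_comm β _ hf i, foldr_add_single β _ (List.nodup_finRange n) hf i
    (List.mem_finRange i)]

lemma lip_of_pd_bound {n : ℕ} {f : (Fin n → ℝ) → ℂ} (hf : ContDiff ℝ (⊤ : ℕ∞) f) {K : ℝ}
    (hK : 0 ≤ K) (h : ∀ i x, ‖pd i f x‖ ≤ K) (x y : Fin n → ℝ) :
    ‖f y - f x‖ ≤ (n * K) * ‖y - x‖ := by
  have hb : ∀ z, ‖fderiv ℝ f z‖ ≤ n * K := by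
    intro z
    apply ContinuousLinearMap.opNorm_le_bound _ (by positivity)
    intro v
    have hv : v = ∑ i, Pi.single i (v i) := by rw [Finset.univ_sum_single]
    calc ‖fderiv ℝ f z v‖ = ‖∑ i, fderiv ℝ f z (Pi.single i (v i))‖ := by
          conv_lhs => rw [hv]
          rw [map_sum]
      _ ≤ ∑ i : Fin n, ‖fderiv ℝ f z (Pi.single i (v i))‖ := norm_sum_le _ _
      _ ≤ ∑ _i : Fin n, K * ‖v‖ := by
          apply Finset.sum_le_sum
          intro i _
          have h1 : Pi.single i (v i) = (v i) • (Pi.single i 1 : Fin n → ℝ) := by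
            rw [← Pi.single_smul, smul_eq_mul, mul_one]
          rw [h1, (fderiv ℝ f z).map_smul]
          rw [norm_smul]
          calc ‖v i‖ * ‖fderiv ℝ f z (Pi.single i 1)‖ ≤ ‖v‖ * K := by
                exact mul_le_mul (norm_le_pi_norm v i) (h i z) (norm_nonneg _)
                  (norm_nonneg _)
            _ = K * ‖v‖ := mul_comm _ _
      _ = n * K * ‖v‖ := by
          rw [Finset.sum_const, Finset.card_univ, Fintype.card_fin, nsmul_eq_mul]; ring
  have := convex_univ.norm_image_sub_le_of_norm_fderiv_le
    (fun z _ => (hf.differentiable (by simp)) z)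
    (fun z _ => hb z) (Set.mem_univ x) (Set.mem_univ y)
  simpa using this

lemma eLpNorm_lt_top_of_decay {n : ℕ} {f : (Fin n → ℝ) → ℂ} {B : ℝ}
    (h : ∀ x, ‖f x‖ * (1 + ‖x‖) ^ (n + 1) ≤ B) {p : ℝ≥0∞} (hp : 1 ≤ p) :
    eLpNorm f p volume < ∞ := by
  have hp0 : p ≠ 0 := by rintro rfl; simp at hp
  set B' := max B 0 with hB'def
  have hB' : (0:ℝ) ≤ B' := le_max_right _ _
  have hbd : ∀ x : Fin n → ℝ, ‖f x‖ ≤ B' * (1 + ‖x‖) ^ (-((n:ℝ) + 1)) := by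
    intro x
    have hpos : (0:ℝ) < (1 + ‖x‖) ^ (n + 1) := by positivity
    have h2 : (1 + ‖x‖) ^ (-((n:ℝ) + 1)) = ((1 + ‖x‖) ^ (n + 1))⁻¹ := by
      rw [← Real.rpow_natCast (1 + ‖x‖) (n + 1), ← Real.rpow_neg (by positivity)]
      norm_num
    rw [h2, mul_comm, ← div_eq_inv_mul]
    apply (le_div_iff₀ hpos).2
    exact (h x).trans (le_max_left _ _)
  by_cases hptop : p = ∞
  · rw [hptop, eLpNorm_exponent_top]
    apply (eLpNormEssSup_le_of_ae_bound (C := B') ?_).trans_lt ENNReal.ofReal_lt_top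
    filter_upwards with x
    refine (hbd x).trans ?_
    calc B' * (1 + ‖x‖) ^ (-((n:ℝ) + 1)) ≤ B' * 1 := by
          apply mul_le_mul_of_nonneg_left _ hB'
          apply Real.rpow_le_one_of_one_le_of_nonpos (by simp [norm_nonneg]) (neg_nonpos.mpr (by positivity))
      _ = B' := mul_one _
  · have hq : 0 < p.toReal := ENNReal.toReal_pos hp0 hptop
    rw [eLpNorm_eq_lintegral_rpow_enorm_toReal hp0 hptop]
    apply ENNReal.rpow_lt_top_of_nonneg (by positivity)
    have key : (∫⁻ x : Fin n → ℝ, (‖f x‖₊ : ℝ≥0∞) ^ p.toReal ∂volume)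
        ≤ ∫⁻ x : Fin n → ℝ, ENNReal.ofReal (B' ^ p.toReal)
            * ENNReal.ofReal ((1 + ‖x‖) ^ (-(((n:ℝ) + 1) * p.toReal))) ∂volume := by
      apply lintegral_mono
      intro x
      have h3 : ((‖f x‖₊ : ℝ≥0∞)) ^ p.toReal = ENNReal.ofReal (‖f x‖ ^ p.toReal) := by
        rw [← enorm_eq_nnnorm, ← ofReal_norm, ← ENNReal.ofReal_rpow_of_nonneg (norm_nonneg _) hq.le]
      dsimp only
      rw [h3, ← ENNReal.ofReal_mul (by positivity)]
      apply ENNReal.ofReal_le_ofReal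
      have h4 : (1 + ‖x‖) ^ (-(((n:ℝ) + 1) * p.toReal))
          = ((1 + ‖x‖) ^ (-((n:ℝ) + 1))) ^ p.toReal := by
        rw [← Real.rpow_mul (by positivity)]
        ring_nf
      rw [h4, ← Real.mul_rpow hB' (Real.rpow_nonneg (by positivity) _)]
      exact Real.rpow_le_rpow (norm_nonneg _) (hbd x) hq.le
    refine ne_of_lt (lt_of_le_of_lt key ?_)
    rw [lintegral_const_mul' _ _ ENNReal.ofReal_ne_top]
    apply ENNReal.mul_lt_top ENNReal.ofReal_lt_top
    apply finite_integral_one_add_norm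
    rw [Module.finrank_fin_fun]
    have hq1 : 1 ≤ p.toReal := by
      rw [← ENNReal.toReal_one]
      exact ENNReal.toReal_mono hptop hp
    nlinarith

lemma EvSmall.and {P Q : ℝ → Prop} (hP : EvSmall P) (hQ : EvSmall Q) :
    EvSmall fun ε => P ε ∧ Q ε := by
  obtain ⟨a, ha0, ha1, ha⟩ := hP
  obtain ⟨b, hb0, hb1, hb⟩ := hQ
  exact ⟨min a b, lt_min ha0 hb0, (min_le_left a b).trans ha1,
    fun ε h0 hm => ⟨ha ε h0 (hm.trans (min_le_left a b)), hb ε h0 (hm.trans (min_le_right a b))⟩⟩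

lemma EvSmall.mono {P Q : ℝ → Prop} (hP : EvSmall P)
    (h : ∀ ε, 0 < ε → ε ≤ 1 → P ε → Q ε) : EvSmall Q := by
  obtain ⟨a, ha0, ha1, ha⟩ := hP
  exact ⟨a, ha0, ha1, fun ε h0 hm => h ε h0 (hm.trans ha1) (ha ε h0 hm)⟩

lemma evsmall_fin {m : ℕ} {P : Fin m → ℝ → Prop} (h : ∀ i, EvSmall (P i)) :
    EvSmall (fun ε => ∀ i, P i ε) := by
  induction m with
  | zero => exact ⟨1, one_pos, le_refl 1, fun ε _ _ i => i.elim0⟩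
  | succ m ih =>
    refine ((h 0).and (ih (fun i => h i.succ))).mono fun ε _ _ hε => ?_
    intro i
    rcases Fin.eq_zero_or_eq_succ i with rfl | ⟨j, rfl⟩
    · exact hε.1
    · exact hε.2 j

lemma monom_zero {n : ℕ} (x : Fin n → ℝ) : monom 0 x = 1 := by simp [monom]

lemma monom_add {n : ℕ} (α α' : Fin n → ℕ) (x : Fin n → ℝ) :
    monom (α + α') x = monom α x * monom α' x := by
  simp [monom, pow_add, Finset.prod_mul_distrib]

lemma monom_single {n : ℕ} (i : Fin n) (k : ℕ) (x : Fin n → ℝ) :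
    monom (Pi.single i k) x = (x i) ^ k := by
  unfold monom
  rw [Finset.prod_eq_single i]
  · simp
  · intro j _ hj
    simp [Pi.single_apply, hj]
  · simp

lemma norm_pow_le_sum {n : ℕ} (x : Fin n → ℝ) (k : ℕ) (hk : 0 < k) :
    ‖x‖ ^ k ≤ ∑ i, |x i| ^ k := by
  rcases Nat.eq_zero_or_pos n with rfl | hn
  · simp [Pi.norm_def, hk.ne']
  · have hnein : Nonempty (Fin n) := Fin.pos_iff_nonempty.mp hn
    have hne : (Finset.univ : Finset (Fin n)).Nonempty := Finset.univ_nonempty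
    obtain ⟨j, _, hj⟩ := Finset.exists_mem_eq_sup Finset.univ hne fun i => ‖x i‖₊
    have hnorm : ‖x‖ = |x j| := by
      rw [Pi.norm_def, hj]
      simp [Real.norm_eq_abs]
    rw [hnorm]
    exact Finset.single_le_sum (f := fun i => |x i| ^ k) (fun i _ => by positivity) (Finset.mem_univ j)

set_option maxHeartbeats 1000000 in
lemma sup_bound_zero {n : ℕ} (p : ℝ≥0∞) (hp : 1 ≤ p) (u : ℝ → (Fin n → ℝ) → ℂ)
    (hsmooth : ∀ ε ∈ Set.Ioc (0 : ℝ) 1, ContDiff ℝ (⊤ : ℕ∞) (u ε))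
    (hmod : SMod u)
    (hLp : ∀ α : Fin n → ℕ, ∀ m : ℕ, ∃ C : ℝ, EvSmall fun ε =>
      (eLpNorm (pdm α (u ε)) p volume).toReal ≤ C * ε ^ m)
    (β : Fin n → ℕ) (k : ℕ) :
    ∃ C : ℝ, 0 ≤ C ∧ EvSmall fun ε => ∀ x, ‖pdm β (u ε) x‖ ≤ C * ε ^ k := by
  obtain ⟨N0, C0, h0⟩ := hmod 0 β
  choose N1 C1 h1 using fun i : Fin n => hmod 0 (β + Pi.single i 1)
  choose N2 C2 h2 using fun i : Fin n => hmod (Pi.single i (n+1)) β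
  set Nall : ℕ := N0 + (∑ i, N1 i) + (∑ i, N2 i) with hNall
  set Call : ℝ := max C0 0 + (∑ i, max (C1 i) 0) + (∑ i, max (C2 i) 0) + 1 with hCall
  have hsum1 : (0:ℝ) ≤ ∑ i, max (C1 i) 0 := Finset.sum_nonneg fun i _ => le_max_right _ _
  have hsum2 : (0:ℝ) ≤ ∑ i, max (C2 i) 0 := Finset.sum_nonneg fun i _ => le_max_right _ _
  have hCall1 : (1:ℝ) ≤ Call := by
    rw [hCall]
    have := le_max_right C0 (0:ℝ)
    linarith
  have hCall0 : (0:ℝ) ≤ Call := le_trans zero_le_one hCall1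
  set m : ℕ := (n+1)*k + n*Nall with hm
  obtain ⟨D, hD⟩ := hLp β m
  -- the generic moderate-bound comparison
  have haux : ∀ (C' : ℝ) (N' : ℕ), max C' 0 ≤ Call → N' ≤ Nall →
      ∀ ε : ℝ, 0 < ε → ε ≤ 1 → C' * ε ^ (-(N' : ℤ)) ≤ Call * ε ^ (-(Nall : ℤ)) := by
    intro C' N' hC hN ε hε0 hε1
    have hinv : (1:ℝ) ≤ ε⁻¹ := (one_le_inv_iff₀.2 ⟨hε0, hε1⟩)
    have hz : ∀ M : ℕ, ε ^ (-(M:ℤ)) = ε⁻¹ ^ M := by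
      intro M
      rw [zpow_neg, ← inv_zpow, zpow_natCast]
    rw [hz, hz]
    calc C' * ε⁻¹ ^ N' ≤ Call * ε⁻¹ ^ N' := by
          apply mul_le_mul_of_nonneg_right (le_trans (le_max_left _ _) hC) (by positivity)
      _ ≤ Call * ε⁻¹ ^ Nall := by
          apply mul_le_mul_of_nonneg_left (pow_le_pow_right₀ hinv hN) hCall0
  set Croot : ℝ := (2*(((n:ℝ)+1)*Call)^n*(max D 0) + 1) ^ ((1:ℝ)/(n+1)) with hCroot
  set Cfin : ℝ := max Croot (2*max D 0) with hCfin
  have hCfin0 : (0:ℝ) ≤ Cfin := le_trans (by positivity) (le_max_right _ _)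
  refine ⟨Cfin, hCfin0, ?_⟩
  refine ((h0.and ((evsmall_fin h1).and ((evsmall_fin h2).and hD)))).mono ?_
  rintro ε hε0 hε1 ⟨hb0, hb1, hb2, hbD⟩ x
  have hu : ContDiff ℝ (⊤ : ℕ∞) (u ε) := hsmooth ε ⟨hε0, hε1⟩
  set f := pdm β (u ε) with hfdef
  have hfsm : ContDiff ℝ (⊤ : ℕ∞) f := pdm_contDiff β hu
  set K : ℝ := Call * ε ^ (-(Nall:ℤ)) with hKdef
  have hεz : (1:ℝ) ≤ ε ^ (-(Nall:ℤ)) := by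
    rw [zpow_neg, ← inv_zpow, zpow_natCast]
    exact one_le_pow₀ (one_le_inv_iff₀.2 ⟨hε0, hε1⟩)
  have hK1 : 1 ≤ K := by
    calc (1:ℝ) = 1 * 1 := (one_mul 1).symm
      _ ≤ Call * ε ^ (-(Nall:ℤ)) := mul_le_mul hCall1 hεz zero_le_one hCall0
  have hK0 : (0:ℝ) ≤ K := zero_le_one.trans hK1
  have hsup : ∀ y, ‖f y‖ ≤ K := by
    intro y
    have h := hb0 y
    rw [monom_zero, abs_one, one_mul] at h
    refine h.trans (haux C0 N0 ?_ ?_ ε hε0 hε1)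
    · rw [hCall]; linarith [hsum1, hsum2]
    · rw [hNall]; omega
  have hpd : ∀ (i : Fin n) y, ‖pd i f y‖ ≤ K := by
    intro i y
    rw [hfdef, pd_pdm β hu i]
    have h := hb1 i y
    rw [monom_zero, abs_one, one_mul] at h
    refine h.trans (haux _ _ ?_ ?_ ε hε0 hε1)
    · have hle := Finset.single_le_sum (f := fun j => max (C1 j) 0)
        (fun j _ => le_max_right _ _) (Finset.mem_univ i)
      rw [hCall]; linarith [le_max_right C0 (0:ℝ), hsum2]
    · have hle := Finset.single_le_sum (f := N1) (fun j _ => Nat.zero_le _) (Finset.mem_univ i)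
      rw [hNall]; omega
  have hlip : ∀ z y : Fin n → ℝ, ‖f y - f z‖ ≤ ((n:ℝ) * K) * ‖y - z‖ :=
    fun z y => lip_of_pd_bound hfsm hK0 hpd z y
  have hdecay : ∀ y, ‖f y‖ * (1 + ‖y‖) ^ (n + 1) ≤ 2^(n+1) * (((n:ℝ)+1) * K) := by
    intro y
    have hstep1 : (1 + ‖y‖) ^ (n + 1) ≤ 2^(n+1) * (1 + ‖y‖^(n+1)) := by
      have h1 : 1 + ‖y‖ ≤ 2 * max 1 ‖y‖ := by
        rcases le_total ‖y‖ 1 with h | h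
        · calc 1 + ‖y‖ ≤ 2 := by linarith
            _ ≤ 2 * max 1 ‖y‖ := by nlinarith [le_max_left (1:ℝ) ‖y‖]
        · calc 1 + ‖y‖ ≤ 2 * ‖y‖ := by linarith
            _ ≤ 2 * max 1 ‖y‖ := by nlinarith [le_max_right (1:ℝ) ‖y‖]
      have h2 : (max 1 ‖y‖)^(n+1) ≤ 1 + ‖y‖^(n+1) := by
        rcases le_total ‖y‖ 1 with h | h
        · rw [max_eq_left h]; simp
        · rw [max_eq_right h]; nlinarith [pow_nonneg (norm_nonneg y) (n+1)]
      calc (1 + ‖y‖) ^ (n + 1) ≤ (2 * max 1 ‖y‖)^(n+1) :=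
            pow_le_pow_left₀ (by positivity) h1 _
        _ = 2^(n+1) * (max 1 ‖y‖)^(n+1) := mul_pow _ _ _
        _ ≤ 2^(n+1) * (1 + ‖y‖^(n+1)) := by
            apply mul_le_mul_of_nonneg_left h2 (by positivity)
    have hterm : ‖f y‖ * ‖y‖^(n+1) ≤ (n:ℝ) * K := by
      have h3 : ‖y‖^(n+1) ≤ ∑ i, |y i|^(n+1) := norm_pow_le_sum y (n+1) (Nat.succ_pos n)
      have h4 : ∀ i : Fin n, |y i|^(n+1) * ‖f y‖ ≤ K := by
        intro i
        have h := hb2 i y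
        rw [monom_single, abs_pow] at h
        refine h.trans (haux _ _ ?_ ?_ ε hε0 hε1)
        · have hle := Finset.single_le_sum (f := fun j => max (C2 j) 0)
            (fun j _ => le_max_right _ _) (Finset.mem_univ i)
          rw [hCall]; linarith [le_max_right C0 (0:ℝ), hsum1]
        · have hle := Finset.single_le_sum (f := N2) (fun j _ => Nat.zero_le _)
            (Finset.mem_univ i)
          rw [hNall]; omega
      calc ‖f y‖ * ‖y‖^(n+1) ≤ ‖f y‖ * ∑ i, |y i|^(n+1) :=
            mul_le_mul_of_nonneg_left h3 (norm_nonneg _)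
        _ = ∑ i : Fin n, |y i|^(n+1) * ‖f y‖ := by rw [Finset.mul_sum]; congr 1; ext i; ring
        _ ≤ ∑ _i : Fin n, K := Finset.sum_le_sum fun i _ => h4 i
        _ = (n:ℝ) * K := by
            rw [Finset.sum_const, Finset.card_univ, Fintype.card_fin, nsmul_eq_mul]
    calc ‖f y‖ * (1 + ‖y‖) ^ (n + 1) ≤ ‖f y‖ * (2^(n+1) * (1 + ‖y‖^(n+1))) :=
          mul_le_mul_of_nonneg_left hstep1 (norm_nonneg _)
      _ = 2^(n+1) * (‖f y‖ + ‖f y‖ * ‖y‖^(n+1)) := by ring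
      _ ≤ 2^(n+1) * (K + (n:ℝ)*K) := by
          apply mul_le_mul_of_nonneg_left _ (by positivity)
          exact add_le_add (hsup y) hterm
      _ = 2^(n+1) * (((n:ℝ)+1) * K) := by ring
  have hfin : eLpNorm f p volume < ⊤ := eLpNorm_lt_top_of_decay hdecay hp
  have hDb : (eLpNorm f p volume).toReal ≤ max D 0 * ε ^ m :=
    hbD.trans (mul_le_mul_of_nonneg_right (le_max_left _ _) (by positivity))
  rcases eq_or_lt_of_le (norm_nonneg (f x)) with heq | ha0
  · rw [← heq]
    positivity
  set a := ‖f x‖ with hadef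
  set L := ((n:ℝ)+1) * K with hLdef
  have hL0 : (0:ℝ) < L := by positivity
  have haL : a ≤ L := by
    have := hsup x
    nlinarith [hK0]
  set r := a / (2*L) with hrdef
  have hr0 : 0 < r := by positivity
  have hball : ∀ y ∈ Metric.ball x r, a/2 ≤ ‖f y‖ := by
    intro y hy
    have hdist : ‖y - x‖ < r := by rwa [Metric.mem_ball, dist_eq_norm] at hy
    have h1 : ‖f y - f x‖ ≤ ((n:ℝ)*K) * ‖y - x‖ := hlip x y
    have h2 : ((n:ℝ)*K) * ‖y - x‖ ≤ L * r := by
      apply mul_le_mul _ hdist.le (norm_nonneg _) hL0.le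
      rw [hLdef]
      nlinarith [hK0]
    have h3 : L * r = a/2 := by
      rw [hrdef, mul_comm (2:ℝ) L, ← div_div, ← mul_div_assoc, mul_comm L (a/L),
        div_mul_cancel₀ a hL0.ne']
    have h4 : ‖f x‖ - ‖f y‖ ≤ ‖f y - f x‖ := by
      rw [norm_sub_rev]; exact norm_sub_norm_le _ _
    rw [← hadef] at h4
    linarith
  have hεk0 : (0:ℝ) < ε ^ k := by positivity
  have hmk : ε ^ m ≤ ε ^ k := pow_le_pow_of_le_one hε0.le hε1 (by rw [hm]; nlinarith [Nat.zero_le (n*Nall), Nat.zero_le (n*k)])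
  by_cases hptop : p = ⊤
  · -- essential supremum case
    have hS : ENNReal.ofReal (a/2) ≤ eLpNorm f p volume := by
      by_contra hcon
      push_neg at hcon
      rw [hptop, eLpNorm_exponent_top, eLpNormEssSup] at hcon
      have hsub : Metric.ball x r ⊆
          {y | essSup (fun z => (‖f z‖₊ : ℝ≥0∞)) volume < (‖f y‖₊ : ℝ≥0∞)} := by
        intro y hy
        have := hball y hy
        have h5 : ENNReal.ofReal (a/2) ≤ (‖f y‖₊ : ℝ≥0∞) := by
          rw [← enorm_eq_nnnorm, ← ofReal_norm]
          exact ENNReal.ofReal_le_ofReal this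
        exact lt_of_lt_of_le hcon h5
      have hz := meas_essSup_lt (f := fun z => (‖f z‖₊ : ℝ≥0∞)) (μ := volume)
      have : volume (Metric.ball x r) = 0 := le_antisymm (le_trans (measure_mono hsub) hz.le) zero_le
      rw [Real.volume_pi_ball x hr0] at this
      simp only [ENNReal.ofReal_eq_zero] at this
      have : (0:ℝ) < (2*r)^(Fintype.card (Fin n)) := by positivity
      linarith
    have h6 : a/2 ≤ (eLpNorm f p volume).toReal := by
      have := ENNReal.toReal_mono hfin.ne hS
      rwa [ENNReal.toReal_ofReal (by positivity)] at this
    calc a ≤ 2 * (max D 0 * ε ^ m) := by linarith [h6.trans hDb]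
      _ ≤ 2 * (max D 0 * ε ^ k) := by
          apply mul_le_mul_of_nonneg_left _ (by norm_num)
          exact mul_le_mul_of_nonneg_left hmk (le_max_right _ _)
      _ = (2 * max D 0) * ε ^ k := by ring
      _ ≤ Cfin * ε ^ k := by
          apply mul_le_mul_of_nonneg_right (le_max_right _ _) hεk0.le
  · -- Lp case
    have hp0 : p ≠ 0 := by rintro rfl; simp at hp
    have hq0 : 0 < p.toReal := ENNReal.toReal_pos hp0 hptop
    have hq1 : 1 ≤ p.toReal := by
      rw [← ENNReal.toReal_one]
      exact ENNReal.toReal_mono hptop hp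
    have hind : eLpNorm ((Metric.ball x r).indicator (fun _ => (a/2 : ℝ))) p volume
        ≤ eLpNorm f p volume := by
      apply eLpNorm_mono
      intro y
      by_cases hy : y ∈ Metric.ball x r
      · rw [Set.indicator_of_mem hy, Real.norm_of_nonneg (by positivity)]
        exact hball y hy
      · rw [Set.indicator_of_notMem hy]
        simp
    rw [eLpNorm_indicator_const measurableSet_ball hp0 hptop] at hind
    have hvol : volume (Metric.ball x r) = ENNReal.ofReal ((2*r)^n) := by
      rw [Real.volume_pi_ball x hr0, Fintype.card_fin]
    rw [hvol] at hind
    have hnn : ‖(a/2 : ℝ)‖ₑ = ENNReal.ofReal (a/2) := by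
      rw [← ofReal_norm, Real.norm_of_nonneg (by positivity)]
    rw [hnn] at hind
    have htoReal : (a/2) * ((2*r)^n) ^ ((1:ℝ)/p.toReal) ≤ (eLpNorm f p volume).toReal := by
      have h7 := ENNReal.toReal_mono hfin.ne hind
      rw [ENNReal.toReal_mul, ← ENNReal.toReal_rpow, ENNReal.toReal_ofReal (by positivity),
        ENNReal.toReal_ofReal (by positivity)] at h7
      exact h7
    have h2r : 2*r = a/L := by rw [hrdef, mul_div_assoc', mul_div_mul_left _ _ (two_ne_zero)]
    have haL1 : a/L ≤ 1 := div_le_one_of_le₀ haL hL0.le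
    have haL0 : 0 < a/L := by positivity
    have hrpow : (a/L)^n ≤ ((a/L)^n) ^ ((1:ℝ)/p.toReal) := by
      rw [← Real.rpow_natCast (a/L) n, ← Real.rpow_mul haL0.le]
      apply Real.rpow_le_rpow_of_exponent_ge haL0 haL1
      rw [mul_one_div]
      exact div_le_self (by positivity) hq1
    have hchain : (a/2) * (a/L)^n ≤ max D 0 * ε ^ m := by
      calc (a/2) * (a/L)^n ≤ (a/2) * (((a/L))^n) ^ ((1:ℝ)/p.toReal) :=
            mul_le_mul_of_nonneg_left hrpow (by positivity)
        _ = (a/2) * ((2*r)^n) ^ ((1:ℝ)/p.toReal) := by rw [h2r]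
        _ ≤ (eLpNorm f p volume).toReal := htoReal
        _ ≤ max D 0 * ε ^ m := hDb
    have hpow : a^(n+1) ≤ 2 * L^n * (max D 0 * ε ^ m) := by
      have h8 : (a/2) * (a/L)^n = a^(n+1) / (2 * L^n) := by
        rw [div_pow]
        field_simp
        ring
      rw [h8] at hchain
      rw [div_le_iff₀ (by positivity)] at hchain
      calc a^(n+1) ≤ max D 0 * ε ^ m * (2 * L^n) := hchain
        _ = 2 * L^n * (max D 0 * ε ^ m) := by ring
    -- now unfold L and the epsilon powers
    have hLn : L^n = (((n:ℝ)+1) * Call)^n * (ε ^ (-(Nall:ℤ)))^n := by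
      rw [hLdef, hKdef, ← mul_assoc, mul_pow]
    have hepspow : ε ^ m * (ε ^ (-(Nall:ℤ)))^n = (ε^k)^(n+1) := by
      have hεne : ε ≠ 0 := hε0.ne'
      rw [← zpow_natCast ε m, ← zpow_natCast ε k, ← zpow_natCast (ε ^ (-(Nall:ℤ))) n,
        ← zpow_mul, ← zpow_add₀ hεne, ← zpow_natCast (ε ^ ((k:ℤ))) (n+1), ← zpow_mul]
      congr 1
      rw [hm]
      push_cast
      ring
    have hfinal : a^(n+1) ≤ (2*(((n:ℝ)+1)*Call)^n*(max D 0) + 1) * (ε^k)^(n+1) := by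
      calc a^(n+1) ≤ 2 * L^n * (max D 0 * ε ^ m) := hpow
        _ = (2*(((n:ℝ)+1)*Call)^n*(max D 0)) * (ε ^ m * (ε ^ (-(Nall:ℤ)))^n) := by
            rw [hLn]; ring
        _ = (2*(((n:ℝ)+1)*Call)^n*(max D 0)) * (ε^k)^(n+1) := by rw [hepspow]
        _ ≤ (2*(((n:ℝ)+1)*Call)^n*(max D 0) + 1) * (ε^k)^(n+1) := by
            apply mul_le_mul_of_nonneg_right _ (by positivity)
            linarith
    have hCrootpow : Croot^(n+1) = 2*(((n:ℝ)+1)*Call)^n*(max D 0) + 1 := by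
      rw [hCroot, ← Real.rpow_natCast ((2*(((n:ℝ)+1)*Call)^n*(max D 0) + 1) ^ ((1:ℝ)/(n+1))) (n+1),
        ← Real.rpow_mul (by positivity)]
      have hone : ((1:ℝ)/(n+1)) * ((n+1 : ℕ) : ℝ) = 1 := by
        push_cast
        field_simp
      rw [hone, Real.rpow_one]
    have h9 : a^(n+1) ≤ (Cfin * ε^k)^(n+1) := by
      calc a^(n+1) ≤ (2*(((n:ℝ)+1)*Call)^n*(max D 0) + 1) * (ε^k)^(n+1) := hfinal
        _ = Croot^(n+1) * (ε^k)^(n+1) := by rw [hCrootpow]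
        _ = (Croot * ε^k)^(n+1) := (mul_pow _ _ _).symm
        _ ≤ (Cfin * ε^k)^(n+1) := by
            apply pow_le_pow_left₀ (by positivity)
            exact mul_le_mul_of_nonneg_right (le_max_left _ _) hεk0.le
    exact le_of_pow_le_pow_left₀ (Nat.succ_ne_zero n) (by positivity) h9

/-- an S-moderate net all of whose derivatives have rapidly decreasing
`L^q` norms is S-negligible. -/
theorem stmt2 {n : ℕ} (p : ℝ≥0∞) (hp : 1 ≤ p) (u : ℝ → (Fin n → ℝ) → ℂ)
    (hsmooth : ∀ ε ∈ Set.Ioc (0 : ℝ) 1, ContDiff ℝ (⊤ : ℕ∞) (u ε))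
    (hmod : SMod u)
    (hLp : ∀ α : Fin n → ℕ, ∀ m : ℕ, ∃ C : ℝ, EvSmall fun ε =>
      (eLpNorm (pdm α (u ε)) p volume).toReal ≤ C * ε ^ m) :
    SNeg u := by
  intro α β k
  obtain ⟨N4, C4, h4⟩ := hmod (α + α) β
  obtain ⟨C5, hC5nn, h5⟩ := sup_bound_zero p hp u hsmooth hmod hLp β (2*k + N4)
  refine ⟨Real.sqrt (max C4 0 * C5), ?_⟩
  refine (h4.and h5).mono ?_
  rintro ε hε0 hε1 ⟨hb4, hb5⟩ x
  have hεk : (0:ℝ) < ε ^ k := by positivity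
  have hC4nn : (0:ℝ) ≤ max C4 0 := le_max_right _ _
  set t := |monom α x| * ‖pdm β (u ε) x‖ with htdef
  have ht0 : 0 ≤ t := by positivity
  have hmm : |monom (α + α) x| = |monom α x| ^ 2 := by
    rw [monom_add, abs_mul, sq]
  have hb4' : |monom (α + α) x| * ‖pdm β (u ε) x‖ ≤ max C4 0 * ε ^ (-(N4:ℤ)) := by
    refine (hb4 x).trans ?_
    apply mul_le_mul_of_nonneg_right (le_max_left _ _) (by positivity)
  have ht2 : t ^ 2 ≤ (max C4 0 * C5) * (ε ^ k) ^ 2 := by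
    have hexp : ε ^ (-(N4:ℤ)) * ε ^ (2*k + N4) = (ε ^ k)^2 := by
      rw [← zpow_natCast ε (2*k + N4), ← zpow_add₀ hε0.ne', ← zpow_natCast ε k,
        ← zpow_natCast (ε ^ (k:ℤ)) 2, ← zpow_mul]
      congr 1
      push_cast
      ring
    calc t ^ 2 = (|monom (α + α) x| * ‖pdm β (u ε) x‖) * ‖pdm β (u ε) x‖ := by
          rw [htdef, hmm]; ring
      _ ≤ (max C4 0 * ε ^ (-(N4:ℤ))) * (C5 * ε ^ (2*k + N4)) := by
          apply mul_le_mul hb4' (hb5 x) (norm_nonneg _)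
          positivity
      _ = (max C4 0 * C5) * (ε ^ (-(N4:ℤ)) * ε ^ (2*k + N4)) := by ring
      _ = (max C4 0 * C5) * (ε ^ k)^2 := by rw [hexp]
  have hsq : (Real.sqrt (max C4 0 * C5) * ε ^ k) ^ 2 = (max C4 0 * C5) * (ε ^ k) ^ 2 := by
    rw [mul_pow, Real.sq_sqrt (by positivity)]
  refine le_of_pow_le_pow_left₀ two_ne_zero (by positivity) ?_
  rw [hsq]
  exact ht2
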